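/- Fix q > 1 and ε ∈ (0,1). There exists a constant β(q,ε) > 0 (depending only on q, ε and K; one may take β(q,ε) = 6K e^{1/2+ε/2+2q}) such that, defining for each γ > 0 the random quantity C^{(γ)}_k = sup{ Σ_{j∈𝒥} |Q^{(γ)}_{ij}(ℓ,w) − Q̃^{(γ)}_{ij}(ℓ,w)| : 0 ≤ w ≤ ℓ ≤ k−1, i ∈ 𝒥 } (with C^{(γ)}_0 = 0), one has P( C^{(γ)}_{⌊γ^{1+ε}⌋} ≥ β(q,ε) (log γ) γ^{−3/2+ε/2} ) = o(γ^{−q}) as γ → ∞. -/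

import Mathlib

/-!
If every partial sum `E_0 + ⋯ + E_{m-1}` with `m ≤ N = ⌊γ^{1+ε}⌋` lies within
`M = γ^{(1+ε)/2} log γ` of `m`, the Lipschitz condition bounds `C_N` deterministically by
`3KM/γ² = 3K (log γ) γ^{-3/2+ε/2}`, so `β = 3K + 1` works. The exponential law has
`E[e^{t(E_0 - 1)}] = e^{-t}/(1-t) ≤ e^{2t²}` for `|t| ≤ 1/2`, and the Chernoff bound at
`t = log γ / (4γ^{(1+ε)/2})` makes each of the `N + 1` deviations exceed `M` with probability
at most `2 exp(-(log γ)²/8)`. Finally `γ^{1+ε} exp(-(log γ)²/8)` decays faster than any power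
of `γ`.
-/

open scoped BigOperators
open MeasureTheory ProbabilityTheory Filter Asymptotics

noncomputable section

/-- `C_N`: `C_0 = 0` and, for `N ≥ 1`,
`C_N = sup { ∑_j |Q_{ij}(ℓ,w) − Q̃_{ij}(ℓ,w)| : 0 ≤ w ≤ ℓ ≤ N−1, i ∈ 𝒥 }`
(the supremum of the empty set in `ℝ` being `0`). -/
def Cconst {J : Type*} [Fintype J] (Q Q' : ℕ → ℕ → Matrix J J ℝ) (N : ℕ) : ℝ :=
  sSup {x : ℝ | ∃ ℓ w, ∃ i : J, w ≤ ℓ ∧ ℓ < N ∧ x = ∑ j, |Q ℓ w i j - Q' ℓ w i j|}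

open Real Finset

lemma mgf_id_expMeasure {r t : ℝ} (hr : 0 < r) (ht : t < r) :
    mgf id (expMeasure r) t = r / (r - t) := by
  have hdens : ∀ x, (exponentialPDF r x).toReal • exp (t * id x)
      = (Set.Ici 0).indicator (fun x => r * exp ((t - r) * x)) x := by
    intro x
    rw [exponentialPDF_eq]
    by_cases hx : 0 ≤ x
    · rw [if_pos hx, Set.indicator_of_mem (Set.mem_Ici.2 hx),
        ENNReal.toReal_ofReal (by positivity), smul_eq_mul, mul_assoc, ← exp_add, id]
      ring_nf
    · rw [if_neg hx, Set.indicator_of_notMem (by simpa using hx)]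
      simp
  have hmeas : Measurable (exponentialPDF r) := (measurable_exponentialPDFReal r).ennreal_ofReal
  change ∫ x, exp (t * id x) ∂volume.withDensity (exponentialPDF r) = _
  rw [integral_withDensity_eq_integral_toReal_smul hmeas
      (ae_of_all _ fun _ => ENNReal.ofReal_lt_top),
    integral_congr_ae (ae_of_all _ hdens), integral_indicator measurableSet_Ici,
    integral_Ici_eq_integral_Ioi, integral_const_mul, integral_exp_mul_Ioi (by linarith),
    mul_zero, exp_zero, ← neg_sub r t, div_neg, neg_div, neg_neg, mul_one_div]

lemma ae_nonneg_expMeasure (r : ℝ) : ∀ᵐ x ∂expMeasure r, 0 ≤ x := by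
  change ∀ᵐ x ∂volume.withDensity (exponentialPDF r), 0 ≤ x
  have hmeas : Measurable (exponentialPDF r) := (measurable_exponentialPDFReal r).ennreal_ofReal
  rw [ae_withDensity_iff hmeas]
  exact ae_of_all _ fun x hx => not_lt.1 fun hneg => hx (exponentialPDF_of_neg hneg)

lemma exp_neg_div_one_sub_le {t : ℝ} (ht : t ≤ 1 / 2) :
    exp (-t) / (1 - t) ≤ exp (2 * t ^ 2) := by
  have h1t : 0 < 1 - t := by linarith
  have hlog : log (1 / (1 - t)) ≤ t + 2 * t ^ 2 := by
    refine (log_le_sub_one_of_pos (by positivity)).trans ?_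
    rw [div_sub_one h1t.ne', div_le_iff₀ h1t]
    nlinarith
  calc exp (-t) / (1 - t) = exp (-t) * exp (log (1 / (1 - t))) := by
        rw [exp_log (by positivity), mul_one_div]
    _ ≤ exp (-t) * exp (t + 2 * t ^ 2) := by gcongr
    _ = exp (2 * t ^ 2) := by rw [← exp_add]; ring_nf

lemma measureReal_abs_ge_le_exp_mul_mgf {Ω : Type*} [MeasurableSpace Ω] {μ : Measure Ω}
    [IsFiniteMeasure μ] {X : Ω → ℝ} {t : ℝ} (M : ℝ) (ht : 0 ≤ t)
    (hpos : Integrable (fun ω => exp (t * X ω)) μ)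
    (hneg : Integrable (fun ω => exp (-t * X ω)) μ) :
    μ.real {ω | M ≤ |X ω|} ≤ exp (-t * M) * (mgf X μ t + mgf X μ (-t)) := by
  have hsplit : {ω | M ≤ |X ω|} ⊆ {ω | M ≤ X ω} ∪ {ω | X ω ≤ -M} := fun ω (hω : M ≤ |X ω|) =>
    show M ≤ X ω ∨ X ω ≤ -M from (le_abs'.1 hω).symm
  calc μ.real {ω | M ≤ |X ω|} ≤ μ.real {ω | M ≤ X ω} + μ.real {ω | X ω ≤ -M} :=
        (measureReal_mono hsplit).trans (measureReal_union_le _ _)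
    _ ≤ exp (-t * M) * mgf X μ t + exp (-(-t) * -M) * mgf X μ (-t) :=
        add_le_add (measure_ge_le_exp_mul_mgf M ht hpos)
          (measure_le_le_exp_mul_mgf (-M) (by linarith) hneg)
    _ = exp (-t * M) * (mgf X μ t + mgf X μ (-t)) := by ring_nf

section IidExponential

variable {Ω : Type*} [MeasurableSpace Ω] {P : Measure Ω} {E : ℕ → Ω → ℝ}

lemma mgf_sum_sub_eq_of_expMeasure (hmeas : ∀ i, Measurable (E i)) (hindep : iIndepFun E P)
    (hexp : ∀ i, P.map (E i) = expMeasure 1) (m : ℕ) {t : ℝ} (ht : t < 1) :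
    mgf (fun ω => ∑ i ∈ range m, E i ω - m) P t = (exp (-t) / (1 - t)) ^ m := by
  have hE : ∀ i, mgf (E i) P t = 1 / (1 - t) := fun i => by
    rw [← mgf_id_map (hmeas i).aemeasurable, hexp i, mgf_id_expMeasure one_pos ht]
  simp_rw [sub_eq_add_neg, ← Finset.sum_apply]
  rw [mgf_add_const, hindep.mgf_sum hmeas, prod_congr rfl fun i _ => hE i, prod_const,
    card_range, div_pow, div_pow, one_pow, ← exp_nat_mul]
  ring_nf

lemma measureReal_abs_sum_sub_ge_le_of_expMeasure [IsProbabilityMeasure P]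
    (hmeas : ∀ i, Measurable (E i)) (hindep : iIndepFun E P)
    (hexp : ∀ i, P.map (E i) = expMeasure 1) (m : ℕ) {t : ℝ} (M : ℝ) (ht₀ : 0 ≤ t)
    (ht : t ≤ 1 / 2) :
    P.real {ω | M ≤ |∑ i ∈ range m, E i ω - m|} ≤ 2 * exp (2 * m * t ^ 2 - t * M) := by
  set X : Ω → ℝ := fun ω => ∑ i ∈ range m, E i ω - m
  have hmgf : ∀ s, |s| ≤ 1 / 2 → 0 < mgf X P s ∧ mgf X P s ≤ exp (2 * m * s ^ 2) := by
    intro s hs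
    have hs1 : s < 1 := by linarith [le_abs_self s]
    rw [mgf_sum_sub_eq_of_expMeasure hmeas hindep hexp m hs1]
    refine ⟨by positivity, ?_⟩
    calc (exp (-s) / (1 - s)) ^ m ≤ exp (2 * s ^ 2) ^ m := by
          gcongr
          exact exp_neg_div_one_sub_le (by linarith [le_abs_self s])
      _ = exp (2 * m * s ^ 2) := by rw [← exp_nat_mul]; ring_nf
  have hts : |t| ≤ 1 / 2 := by rwa [abs_of_nonneg ht₀]
  have hnts : |-t| ≤ 1 / 2 := by rwa [abs_neg]
  obtain ⟨hpos, hle⟩ := hmgf t hts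
  obtain ⟨hpos', hle'⟩ := hmgf (-t) hnts
  calc P.real {ω | M ≤ |X ω|} ≤ exp (-t * M) * (mgf X P t + mgf X P (-t)) :=
        measureReal_abs_ge_le_exp_mul_mgf M ht₀ (mgf_pos_iff.1 hpos) (mgf_pos_iff.1 hpos')
    _ ≤ exp (-t * M) * (exp (2 * m * t ^ 2) + exp (2 * m * (-t) ^ 2)) := by gcongr
    _ = 2 * exp (2 * m * t ^ 2 - t * M) := by
        rw [neg_sq, sub_eq_add_neg, exp_add, ← neg_mul]; ring

lemma measureReal_abs_sum_sub_ge_le_exp_sq_of_expMeasure [IsProbabilityMeasure P]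
    (hmeas : ∀ i, Measurable (E i)) (hindep : iIndepFun E P)
    (hexp : ∀ i, P.map (E i) = expMeasure 1) {m : ℕ} {a L : ℝ}
    (ha : 0 < a) (hm : (m : ℝ) ≤ a ^ 2) (hL₀ : 0 ≤ L) (hL : L ≤ 2 * a) :
    P.real {ω | L * a ≤ |∑ i ∈ range m, E i ω - m|} ≤ 2 * exp (-(L ^ 2 / 8)) := by
  refine (measureReal_abs_sum_sub_ge_le_of_expMeasure hmeas hindep hexp m (L * a)
    (t := L / (4 * a)) (by positivity) (by rw [div_le_iff₀ (by positivity)]; linarith)).trans ?_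
  gcongr
  have : 2 * m * (L / (4 * a)) ^ 2 ≤ 2 * a ^ 2 * (L / (4 * a)) ^ 2 := by gcongr
  have h : 2 * a ^ 2 * (L / (4 * a)) ^ 2 - L / (4 * a) * (L * a) = -(L ^ 2 / 8) := by
    field_simp; ring
  linarith

end IidExponential

section Grid

variable {J : Type*} [Fintype J] [DecidableEq J]

/-- The `E_i` are indexed from `0` here and from `1` in the paper, so
`χ_ℓ = (e 0 + ⋯ + e (ℓ-1)) / γ`. -/
def arrivalTime (γ : ℝ) (e : ℕ → ℝ) (ℓ : ℕ) : ℝ := (∑ i ∈ range ℓ, e i) / γ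

def randomQ (Λ : ℝ → ℝ → Matrix J J ℝ) (γ : ℝ) (e : ℕ → ℝ) (ℓ w : ℕ) : Matrix J J ℝ :=
  1 + γ⁻¹ • Λ (arrivalTime γ e (ℓ + 1)) (arrivalTime γ e (ℓ + 1) - arrivalTime γ e (ℓ - w))

def gridQ (Λ : ℝ → ℝ → Matrix J J ℝ) (γ : ℝ) (ℓ w : ℕ) : Matrix J J ℝ :=
  1 + γ⁻¹ • Λ (((ℓ : ℝ) + 1) / γ) (((w : ℝ) + 1) / γ)

lemma sum_abs_one_add_smul_sub (c : ℝ) (A B : Matrix J J ℝ) (i : J) :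
    ∑ j, |(1 + c • A) i j - (1 + c • B) i j| = |c| * ∑ j, |A i j - B i j| := by
  rw [mul_sum]
  refine sum_congr rfl fun j _ => ?_
  rw [Matrix.add_apply, Matrix.add_apply, add_sub_add_left_eq_sub, Matrix.smul_apply,
    Matrix.smul_apply, smul_eq_mul, smul_eq_mul, ← mul_sub, abs_mul]

lemma abs_arrivalTime_sub_le {γ M : ℝ} {e : ℕ → ℝ} {m : ℕ} (hγ : 0 < γ)
    (hdev : |∑ i ∈ range m, e i - m| ≤ M) : |arrivalTime γ e m - m / γ| ≤ M / γ := by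
  rw [arrivalTime, ← sub_div, abs_div, abs_of_pos hγ]
  gcongr

lemma Cconst_randomQ_gridQ_le (Λ : ℝ → ℝ → Matrix J J ℝ) {K : ℝ} (hK : 0 ≤ K)
    (hLip : ∀ s₁ s₂ v₁ v₂ : ℝ, 0 ≤ s₁ → 0 ≤ s₂ → 0 ≤ v₁ → 0 ≤ v₂ →
      ∀ i : J, ∑ j, |Λ s₁ v₁ i j - Λ s₂ v₂ i j| ≤ K * (|s₁ - s₂| + |v₁ - v₂|))
    {γ M : ℝ} (hγ : 0 < γ) {N : ℕ} {e : ℕ → ℝ} (he : ∀ i < N, 0 ≤ e i)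
    (hdev : ∀ m ≤ N, |∑ i ∈ range m, e i - m| ≤ M) :
    Cconst (randomQ Λ γ e) (gridQ Λ γ) N ≤ 3 * K * M / γ ^ 2 := by
  have hM : 0 ≤ M := by simpa using hdev 0 N.zero_le
  refine Real.sSup_le ?_ (by positivity)
  rintro _ ⟨ℓ, w, i, hwℓ, hℓN, rfl⟩
  set χ := arrivalTime γ e
  have hχ_nonneg : 0 ≤ χ (ℓ - w) :=
    div_nonneg (sum_nonneg fun k hk => he k (by grind)) hγ.le
  have hχ_mono : χ (ℓ - w) ≤ χ (ℓ + 1) := by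
    refine div_le_div_of_nonneg_right (sum_le_sum_of_subset_of_nonneg
      (range_subset_range.2 (by omega)) fun k hk _ => he k ?_) hγ.le
    grind
  have h₁ : |χ (ℓ + 1) - ((ℓ : ℝ) + 1) / γ| ≤ M / γ := by
    simpa using abs_arrivalTime_sub_le hγ (hdev (ℓ + 1) hℓN)
  have h₂ : |χ (ℓ - w) - ((ℓ : ℝ) - w) / γ| ≤ M / γ := by
    simpa [Nat.cast_sub hwℓ] using abs_arrivalTime_sub_le hγ (hdev (ℓ - w) (by omega))
  have hv : |χ (ℓ + 1) - χ (ℓ - w) - ((w : ℝ) + 1) / γ| ≤ 2 * (M / γ) :=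
    calc |χ (ℓ + 1) - χ (ℓ - w) - ((w : ℝ) + 1) / γ|
        = |(χ (ℓ + 1) - ((ℓ : ℝ) + 1) / γ) - (χ (ℓ - w) - ((ℓ : ℝ) - w) / γ)| := by ring_nf
      _ ≤ M / γ + M / γ := (abs_sub _ _).trans (add_le_add h₁ h₂)
      _ = 2 * (M / γ) := by ring
  calc ∑ j, |randomQ Λ γ e ℓ w i j - gridQ Λ γ ℓ w i j|
      = γ⁻¹ * ∑ j, |Λ (χ (ℓ + 1)) (χ (ℓ + 1) - χ (ℓ - w)) i j
          - Λ (((ℓ : ℝ) + 1) / γ) (((w : ℝ) + 1) / γ) i j| := by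
        rw [randomQ, gridQ, sum_abs_one_add_smul_sub, abs_of_pos (inv_pos.2 hγ)]
    _ ≤ γ⁻¹ * (K * (|χ (ℓ + 1) - ((ℓ : ℝ) + 1) / γ|
          + |χ (ℓ + 1) - χ (ℓ - w) - ((w : ℝ) + 1) / γ|)) := by
        gcongr
        exact hLip _ _ _ _ (hχ_nonneg.trans hχ_mono) (by positivity)
          (sub_nonneg.2 hχ_mono) (by positivity) i
    _ ≤ γ⁻¹ * (K * (M / γ + 2 * (M / γ))) := by gcongr
    _ = 3 * K * M / γ ^ 2 := by field_simp; ring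

end Grid

lemma isLittleO_rpow_mul_exp_neg_mul_log_sq {c : ℝ} (hc : 0 < c) (a b : ℝ) :
    (fun x : ℝ => x ^ a * exp (-c * log x ^ 2)) =o[atTop] fun x => x ^ b := by
  have hpoly : Tendsto (fun u : ℝ => u * (b - a + c * u)) atTop atTop :=
    tendsto_id.atTop_mul_atTop₀
      (tendsto_atTop_add_const_left _ _ (tendsto_id.const_mul_atTop hc))
  refine (isLittleO_exp_comp_exp_comp (f := fun x => a * log x - c * log x ^ 2)
      (g := fun x => b * log x)).2 ((hpoly.comp tendsto_log_atTop).congr fun x => ?_)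
    |>.congr' ?_ ?_
  · simp only [Function.comp_apply]
    ring
  all_goals
    filter_upwards [eventually_gt_atTop 0] with x hx
    rw [rpow_def_of_pos hx]
    try rw [← exp_add]
    ring_nf

section RandomGrid

variable {Ω : Type*} [MeasurableSpace Ω] {P : Measure Ω} {E : ℕ → Ω → ℝ}
  {J : Type*} [Fintype J] [DecidableEq J] {Λ : ℝ → ℝ → Matrix J J ℝ} {K : ℝ}

lemma measureReal_Cconst_randomQ_ge_le_sum [IsFiniteMeasure P]
    (hmeas : ∀ i, Measurable (E i)) (hexp : ∀ i, P.map (E i) = expMeasure 1) (hK : 0 ≤ K)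
    (hLip : ∀ s₁ s₂ v₁ v₂ : ℝ, 0 ≤ s₁ → 0 ≤ s₂ → 0 ≤ v₁ → 0 ≤ v₂ →
      ∀ i : J, ∑ j, |Λ s₁ v₁ i j - Λ s₂ v₂ i j| ≤ K * (|s₁ - s₂| + |v₁ - v₂|))
    {γ M c : ℝ} (hγ : 0 < γ) (hc : 3 * K * M / γ ^ 2 < c) (N : ℕ) :
    P.real {ω | c ≤ Cconst (randomQ Λ γ (E · ω)) (gridQ Λ γ) N}
      ≤ ∑ m ∈ range (N + 1), P.real {ω | M ≤ |∑ i ∈ range m, E i ω - m|} := by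
  have hnonneg : ∀ᵐ ω ∂P, ∀ i, 0 ≤ E i ω := ae_all_iff.2 fun i =>
    (ae_map_iff (hmeas i).aemeasurable (measurableSet_le measurable_const measurable_id)).1
      (hexp i ▸ ae_nonneg_expMeasure 1)
  have hsub : {ω | c ≤ Cconst (randomQ Λ γ (E · ω)) (gridQ Λ γ) N}
      ≤ᵐ[P] ⋃ m ∈ range (N + 1), {ω | M ≤ |∑ i ∈ range m, E i ω - m|} := by
    filter_upwards [hnonneg] with ω hω (hcω : c ≤ _)
    show ω ∈ ⋃ m ∈ range (N + 1), _
    by_contra hdev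
    simp only [Set.mem_iUnion, exists_prop, mem_range, Order.lt_add_one_iff, Set.mem_ofPred_eq,
      not_exists, not_and, not_le] at hdev
    have := Cconst_randomQ_gridQ_le Λ hK hLip hγ (fun i _ => hω i) fun m hm => (hdev m hm).le
    linarith
  exact (ENNReal.toReal_mono (measure_ne_top _ _) (measure_mono_ae hsub)).trans
    (measureReal_biUnion_finset_le _ _)

lemma measureReal_Cconst_randomQ_ge_le [IsProbabilityMeasure P]
    (hmeas : ∀ i, Measurable (E i)) (hindep : iIndepFun E P)
    (hexp : ∀ i, P.map (E i) = expMeasure 1) (hK : 0 ≤ K)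
    (hLip : ∀ s₁ s₂ v₁ v₂ : ℝ, 0 ≤ s₁ → 0 ≤ s₂ → 0 ≤ v₁ → 0 ≤ v₂ →
      ∀ i : J, ∑ j, |Λ s₁ v₁ i j - Λ s₂ v₂ i j| ≤ K * (|s₁ - s₂| + |v₁ - v₂|))
    {γ ε : ℝ} (hγ : 1 < γ) (hε : 0 < ε) :
    P.real {ω | (3 * K + 1) * log γ * γ ^ (-(3:ℝ)/2 + ε/2) ≤
        Cconst (randomQ Λ γ (E · ω)) (gridQ Λ γ) ⌊γ ^ ((1:ℝ) + ε)⌋₊}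
      ≤ 4 * (γ ^ ((1:ℝ) + ε) * exp (-(1 / 8) * log γ ^ 2)) := by
  set N := ⌊γ ^ ((1:ℝ) + ε)⌋₊
  set a := γ ^ ((1 + ε) / 2)
  have hγ₀ : 0 < γ := by linarith
  have hlog : 0 < log γ := log_pos hγ
  have ha : 0 < a := rpow_pos_of_pos hγ₀ _
  have ha2 : a ^ 2 = γ ^ ((1:ℝ) + ε) := by
    rw [← rpow_natCast, ← rpow_mul hγ₀.le]
    norm_num
  have hN : (N : ℝ) ≤ a ^ 2 := ha2 ▸ Nat.floor_le (by positivity)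
  have hL : log γ ≤ 2 * a := by
    refine (log_le_rpow_div hγ₀.le (by positivity : 0 < (1 + ε) / 2)).trans ?_
    rw [div_le_iff₀ (by positivity)]
    nlinarith
  have hthr : 3 * K * (log γ * a) / γ ^ 2 < (3 * K + 1) * log γ * γ ^ (-(3:ℝ)/2 + ε/2) := by
    have hrate : a / γ ^ 2 = γ ^ (-(3:ℝ)/2 + ε/2) := by
      rw [← rpow_natCast, ← rpow_sub hγ₀]
      ring_nf
    calc 3 * K * (log γ * a) / γ ^ 2 = 3 * K * (log γ * (a / γ ^ 2)) := by ring
      _ < (3 * K + 1) * (log γ * (a / γ ^ 2)) :=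
        mul_lt_mul_of_pos_right (by linarith) (by positivity)
      _ = _ := by rw [hrate, mul_assoc]
  have h1 : (1 : ℝ) ≤ γ ^ ((1:ℝ) + ε) := one_le_rpow hγ.le (by linarith)
  calc _ ≤ ∑ m ∈ range (N + 1), P.real {ω | log γ * a ≤ |∑ i ∈ range m, E i ω - m|} :=
        measureReal_Cconst_randomQ_ge_le_sum hmeas hexp hK hLip hγ₀ hthr N
    _ ≤ ∑ m ∈ range (N + 1), 2 * exp (-(log γ ^ 2 / 8)) := by
        refine sum_le_sum fun m hm => ?_
        refine measureReal_abs_sum_sub_ge_le_exp_sq_of_expMeasure hmeas hindep hexp ha ?_ hlog.le hL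
        exact le_trans (by exact_mod_cast Nat.lt_succ_iff.1 (mem_range.1 hm)) hN
    _ = (N + 1) * (2 * exp (-(log γ ^ 2 / 8))) := by simp
    _ ≤ (2 * γ ^ ((1:ℝ) + ε)) * (2 * exp (-(log γ ^ 2 / 8))) := by
        gcongr
        linarith [ha2 ▸ hN]
    _ = 4 * (γ ^ ((1:ℝ) + ε) * exp (-(1 / 8) * log γ ^ 2)) := by ring_nf

end RandomGrid

theorem Cconst_random_grid_littleO_general
    {Ω : Type*} [MeasurableSpace Ω] (P : Measure Ω) [IsProbabilityMeasure P]
    {J : Type*} [Fintype J] [DecidableEq J]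
    (Λ : ℝ → ℝ → Matrix J J ℝ) (K : ℝ) (hK : 0 ≤ K)
    (hLip : ∀ s₁ s₂ v₁ v₂ : ℝ, 0 ≤ s₁ → 0 ≤ s₂ → 0 ≤ v₁ → 0 ≤ v₂ →
      ∀ i : J, ∑ j, |Λ s₁ v₁ i j - Λ s₂ v₂ i j| ≤ K * (|s₁ - s₂| + |v₁ - v₂|))
    -- (E_i) is an i.i.d. sequence of rate-one exponential random variables
    (E : ℕ → Ω → ℝ) (hEmeas : ∀ i, Measurable (E i))
    (hEindep : iIndepFun E P)
    (hEexp : ∀ i, P.map (E i) = expMeasure 1)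
    (q ε : ℝ) (hε : 0 < ε) :
    ∃ β : ℝ, 0 < β ∧
      (fun γ : ℝ =>
        (P {ω |
          β * Real.log γ * γ ^ (-(3:ℝ)/2 + ε/2) ≤
            Cconst
              -- the random matrices Q^{(γ)}(ℓ,w), built from the arrival times
              -- χ^{(γ)}_ℓ = (E_1 + ⋯ + E_ℓ)/γ of a Poisson process of intensity γ
              (fun ℓ w => 1 + γ⁻¹ •
                Λ ((∑ i ∈ Finset.range (ℓ+1), E i ω) / γ)
                  ((∑ i ∈ Finset.range (ℓ+1), E i ω) / γ -
                    (∑ i ∈ Finset.range (ℓ-w), E i ω) / γ))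
              -- the deterministic matrices Q̃^{(γ)}(ℓ,w)
              (fun ℓ w => 1 + γ⁻¹ • Λ (((ℓ:ℝ)+1)/γ) (((w:ℝ)+1)/γ))
              ⌊γ ^ ((1:ℝ) + ε)⌋₊}).toReal)
      =o[atTop] fun γ : ℝ => γ ^ (-q) := by
  refine ⟨3 * K + 1, by positivity, ?_⟩
  refine IsBigO.trans_isLittleO (IsBigO.of_norm_eventuallyLE ?_)
    ((isLittleO_rpow_mul_exp_neg_mul_log_sq (by norm_num : (0:ℝ) < 1 / 8)
      ((1:ℝ) + ε) (-q)).const_mul_left 4)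
  filter_upwards [eventually_gt_atTop 1] with γ hγ
  rw [norm_of_nonneg ENNReal.toReal_nonneg]
  exact measureReal_Cconst_randomQ_ge_le hEmeas hEindep hEexp hK hLip hγ hε

theorem Cconst_random_grid_littleO
    {Ω : Type*} [MeasurableSpace Ω] (P : Measure Ω) [IsProbabilityMeasure P]
    {J : Type*} [Fintype J] [DecidableEq J] [Nonempty J]
    (Λ : ℝ → ℝ → Matrix J J ℝ) (K : ℝ) (hK : 0 ≤ K)
    (hLip : ∀ s₁ s₂ v₁ v₂ : ℝ, 0 ≤ s₁ → 0 ≤ s₂ → 0 ≤ v₁ → 0 ≤ v₂ →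
      ∀ i : J, ∑ j, |Λ s₁ v₁ i j - Λ s₂ v₂ i j| ≤ K * (|s₁ - s₂| + |v₁ - v₂|))
    -- (E_i) is an i.i.d. sequence of rate-one exponential random variables
    (E : ℕ → Ω → ℝ) (hEmeas : ∀ i, Measurable (E i))
    (hEindep : iIndepFun E P)
    (hEexp : ∀ i, P.map (E i) = expMeasure 1)
    (q ε : ℝ) (hq : 1 < q) (hε : 0 < ε) (hε1 : ε < 1) :
    ∃ β : ℝ, 0 < β ∧
      (fun γ : ℝ =>
        (P {ω |
          β * Real.log γ * γ ^ (-(3:ℝ)/2 + ε/2) ≤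
            Cconst
              -- the random matrices Q^{(γ)}(ℓ,w), built from the arrival times
              -- χ^{(γ)}_ℓ = (E_1 + ⋯ + E_ℓ)/γ of a Poisson process of intensity γ
              (fun ℓ w => 1 + γ⁻¹ •
                Λ ((∑ i ∈ Finset.range (ℓ+1), E i ω) / γ)
                  ((∑ i ∈ Finset.range (ℓ+1), E i ω) / γ -
                    (∑ i ∈ Finset.range (ℓ-w), E i ω) / γ))
              -- the deterministic matrices Q̃^{(γ)}(ℓ,w)
              (fun ℓ w => 1 + γ⁻¹ • Λ (((ℓ:ℝ)+1)/γ) (((w:ℝ)+1)/γ))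
              ⌊γ ^ ((1:ℝ) + ε)⌋₊}).toReal)
      =o[atTop] fun γ : ℝ => γ ^ (-q) :=
  Cconst_random_grid_littleO_general P Λ K hK hLip E hEmeas hEindep hEexp q ε hε

end
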